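/- Let η : [0,∞) → M⁺([0,∞)) be bounded and Lipschitz with respect to the flat norm, i.e. sup_y ‖η(y)‖_{BL}^* < ∞ and ‖η(y₁) − η(y₂)‖_{BL}^* ≤ L|y₁ − y₂|. Then the operator C defined on finite signed measures by (Cμ)(B) := ∫_{[0,∞)} η(y)(B) dμ(y) is a bounded linear operator with respect to the flat norm, with ‖Cμ‖_{BL}^* ≤ (sup_y ‖η(y)‖_{BL}^* + L) · ‖μ‖_{BL}^*, and C maps nonnegative measures to nonnegative measures. -/

import Mathlib

open MeasureTheory
open scoped NNReal

/-- sup norm. -/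
noncomputable def supN (φ : ℝ≥0 → ℝ) : ℝ := ⨆ x, |φ x|

/-- Lipschitz constant. -/
noncomputable def lipC (φ : ℝ≥0 → ℝ) : ℝ :=
  sInf {K : ℝ | 0 ≤ K ∧ ∀ x y, |φ x - φ y| ≤ K * dist x y}

/-- Bounded Lipschitz norm. -/
noncomputable def blN (φ : ℝ≥0 → ℝ) : ℝ := supN φ + lipC φ

/-- `φ` is bounded and Lipschitz. -/
def IsBL (φ : ℝ≥0 → ℝ) : Prop :=
  (∃ C : ℝ, ∀ x, |φ x| ≤ C) ∧ ∃ K : ℝ, ∀ x y, |φ x - φ y| ≤ K * dist x y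

/-- Flat (dual bounded Lipschitz) distance between two finite nonnegative measures. -/
noncomputable def flatDist (μ ν : Measure ℝ≥0) : ℝ :=
  sSup {r : ℝ | ∃ φ : ℝ≥0 → ℝ, IsBL φ ∧ blN φ ≤ 1 ∧
    r = |(∫ x, φ x ∂μ) - ∫ x, φ x ∂ν|}

/-- Flat norm of a nonnegative measure. -/
noncomputable def flatNorm (μ : Measure ℝ≥0) : ℝ := flatDist μ 0

/- ------------------ auxiliary lemmas ------------------ -/

lemma lipSet_nonempty {φ : ℝ≥0 → ℝ} (h : IsBL φ) :
    {K : ℝ | 0 ≤ K ∧ ∀ x y, |φ x - φ y| ≤ K * dist x y}.Nonempty := by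
  obtain ⟨K, hK⟩ := h.2
  exact ⟨max K 0, le_max_right _ _, fun x y =>
    (hK x y).trans (mul_le_mul_of_nonneg_right (le_max_left _ _) dist_nonneg)⟩

lemma lipC_nonneg {φ : ℝ≥0 → ℝ} (h : IsBL φ) : 0 ≤ lipC φ :=
  le_csInf (lipSet_nonempty h) (fun _ hb => hb.1)

lemma supN_nonneg (φ : ℝ≥0 → ℝ) : 0 ≤ supN φ :=
  Real.iSup_nonneg (fun x => abs_nonneg _)

lemma abs_le_supN {φ : ℝ≥0 → ℝ} (h : IsBL φ) (x : ℝ≥0) : |φ x| ≤ supN φ := by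
  obtain ⟨C, hC⟩ := h.1
  exact le_ciSup ⟨C, by rintro r ⟨y, rfl⟩; exact hC y⟩ x

lemma isBL_continuous {φ : ℝ≥0 → ℝ} (h : IsBL φ) : Continuous φ := by
  obtain ⟨K, hK⟩ := h.2
  refine (LipschitzWith.of_dist_le_mul (K := Real.toNNReal (max K 0)) ?_).continuous
  intro x y
  calc dist (φ x) (φ y) = |φ x - φ y| := Real.dist_eq _ _
    _ ≤ K * dist x y := hK x y
    _ ≤ max K 0 * dist x y := mul_le_mul_of_nonneg_right (le_max_left _ _) dist_nonneg
    _ = Real.toNNReal (max K 0) * dist x y := by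
        rw [Real.coe_toNNReal _ (le_max_right _ _)]

lemma isBL_integrable {φ : ℝ≥0 → ℝ} (h : IsBL φ) (μ : Measure ℝ≥0)
    [IsFiniteMeasure μ] : Integrable φ μ := by
  obtain ⟨C, hC⟩ := h.1
  exact (integrable_const C).mono'
    ((isBL_continuous h).aestronglyMeasurable)
    (Filter.Eventually.of_forall fun x => by simpa using hC x)

lemma integral_abs_le {φ : ℝ≥0 → ℝ} (h : IsBL φ) (h1 : blN φ ≤ 1)
    (μ : Measure ℝ≥0) [IsFiniteMeasure μ] :
    |∫ x, φ x ∂μ| ≤ (μ Set.univ).toReal := by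
  have hb : ∀ x, |φ x| ≤ 1 := fun x =>
    (abs_le_supN h x).trans (by have := lipC_nonneg h; unfold blN at h1; linarith)
  calc |∫ x, φ x ∂μ| ≤ ∫ x, |φ x| ∂μ := by
        simpa [Real.norm_eq_abs] using norm_integral_le_integral_norm (μ := μ) φ
    _ ≤ ∫ _x, (1 : ℝ) ∂μ := by
        refine integral_mono ((isBL_integrable h μ).abs) (integrable_const 1) hb
    _ = (μ Set.univ).toReal := by simp; rfl

lemma flat_bddAbove (μ ν : Measure ℝ≥0) [IsFiniteMeasure μ] [IsFiniteMeasure ν] :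
    BddAbove {r : ℝ | ∃ φ : ℝ≥0 → ℝ, IsBL φ ∧ blN φ ≤ 1 ∧
      r = |(∫ x, φ x ∂μ) - ∫ x, φ x ∂ν|} := by
  refine ⟨(μ Set.univ).toReal + (ν Set.univ).toReal, ?_⟩
  rintro r ⟨φ, hBL, h1, rfl⟩
  calc |(∫ x, φ x ∂μ) - ∫ x, φ x ∂ν| ≤ |∫ x, φ x ∂μ| + |∫ x, φ x ∂ν| :=
        abs_sub _ _
    _ ≤ _ := add_le_add (integral_abs_le hBL h1 μ) (integral_abs_le hBL h1 ν)

lemma isBL_zero : IsBL (fun _ => (0 : ℝ)) :=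
  ⟨⟨0, fun _ => by simp⟩, ⟨0, fun x y => by simp⟩⟩

lemma blN_zero_le : blN (fun _ => (0 : ℝ)) ≤ 1 := by
  have h1 : supN (fun _ => (0 : ℝ)) = 0 := by
    unfold supN; simp
  have h2 : lipC (fun _ => (0 : ℝ)) ≤ 0 := by
    refine csInf_le ⟨0, fun b hb => hb.1⟩ ?_
    exact ⟨le_refl 0, fun x y => by simp⟩
  unfold blN; rw [h1]; linarith

lemma zero_mem_flatSet (μ ν : Measure ℝ≥0) :
    (0 : ℝ) ∈ {r : ℝ | ∃ φ : ℝ≥0 → ℝ, IsBL φ ∧ blN φ ≤ 1 ∧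
      r = |(∫ x, φ x ∂μ) - ∫ x, φ x ∂ν|} :=
  ⟨fun _ => 0, isBL_zero, blN_zero_le, by simp⟩

lemma flatDist_nonneg (μ ν : Measure ℝ≥0) [IsFiniteMeasure μ] [IsFiniteMeasure ν] :
    0 ≤ flatDist μ ν :=
  le_csSup (flat_bddAbove μ ν) (zero_mem_flatSet μ ν)

lemma le_flatDist {φ : ℝ≥0 → ℝ} (h : IsBL φ) (h1 : blN φ ≤ 1)
    (μ ν : Measure ℝ≥0) [IsFiniteMeasure μ] [IsFiniteMeasure ν] :
    |(∫ x, φ x ∂μ) - ∫ x, φ x ∂ν| ≤ flatDist μ ν :=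
  le_csSup (flat_bddAbove μ ν) ⟨φ, h, h1, rfl⟩

/-- The recruitment operator `Cμ = ∫ η(y) dμ(y)`, with `η` bounded (`‖η(y)‖_BL^* ≤ B`)
and Lipschitz (constant `L`) in the flat norm, is bounded in the flat norm with
`‖Cμ − Cν‖_BL^* ≤ (B + L)‖μ − ν‖_BL^*`; it maps nonnegative measures to nonnegative
measures (built into the statement as `Cop` takes values in measures). -/
theorem recruitment_operator_bounded
    (η : ℝ≥0 → Measure ℝ≥0) (hηfin : ∀ y, IsFiniteMeasure (η y))
    (B L : ℝ) (hB : ∀ y, flatNorm (η y) ≤ B)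
    (hL : ∀ y₁ y₂, flatDist (η y₁) (η y₂) ≤ L * dist y₁ y₂)
    (Cop : Measure ℝ≥0 → Measure ℝ≥0)
    (hCfin : ∀ μ : Measure ℝ≥0, IsFiniteMeasure μ → IsFiniteMeasure (Cop μ))
    (hchar : ∀ μ : Measure ℝ≥0, IsFiniteMeasure μ → ∀ φ : ℝ≥0 → ℝ, IsBL φ →
      ∫ z, φ z ∂(Cop μ) = ∫ y, (∫ z, φ z ∂(η y)) ∂μ) :
    ∀ μ ν : Measure ℝ≥0, IsFiniteMeasure μ → IsFiniteMeasure ν →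
      flatDist (Cop μ) (Cop ν) ≤ (B + L) * flatDist μ ν := by
  have := hηfin
  -- nonnegativity of B and L
  have hB0 : 0 ≤ B := by
    have h1 : 0 ≤ flatNorm (η 0) := by
      have := hηfin 0
      exact flatDist_nonneg (η 0) 0
    linarith [hB 0]
  have hL0 : 0 ≤ L := by
    have h1 : 0 ≤ flatDist (η 0) (η 1) := by
      have := hηfin 0; have := hηfin 1
      exact flatDist_nonneg (η 0) (η 1)
    have h2 := hL 0 1
    have h3 : dist (0 : ℝ≥0) 1 = 1 := by
      simp [NNReal.dist_eq]
    rw [h3, mul_one] at h2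
    linarith
  intro μ ν hμ hν
  have := hμ; have := hν
  have hfd0 : 0 ≤ flatDist μ ν := flatDist_nonneg μ ν
  refine Real.sSup_le ?_ (by positivity)
  rintro r ⟨φ, hBL, h1, rfl⟩
  -- the pushed-forward test function
  set ψ : ℝ≥0 → ℝ := fun y => ∫ z, φ z ∂(η y) with hψ
  have hψb : ∀ y, |ψ y| ≤ B := by
    intro y
    have := hηfin y
    have h := le_flatDist hBL h1 (η y) 0
    simpa [hψ, flatNorm] using h.trans (hB y)
  have hψl : ∀ y₁ y₂, |ψ y₁ - ψ y₂| ≤ L * dist y₁ y₂ := by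
    intro y₁ y₂
    have := hηfin y₁; have := hηfin y₂
    exact (le_flatDist hBL h1 (η y₁) (η y₂)).trans (hL y₁ y₂)
  have hψBL : IsBL ψ := ⟨⟨B, hψb⟩, ⟨L, hψl⟩⟩
  -- rewrite via the characterization
  have hrw : |(∫ z, φ z ∂(Cop μ)) - ∫ z, φ z ∂(Cop ν)|
      = |(∫ y, ψ y ∂μ) - ∫ y, ψ y ∂ν| := by
    rw [hchar μ hμ φ hBL, hchar ν hν φ hBL]
  rw [hrw]
  rcases eq_or_lt_of_le (by linarith : (0:ℝ) ≤ B + L) with hBL0 | hBL0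
  · -- degenerate case B + L = 0, so B = 0 and ψ ≡ 0
    have hBz : B = 0 := by linarith
    have hψ0 : ∀ y, ψ y = 0 := by
      intro y
      have := hψb y
      rw [hBz] at this
      exact abs_eq_zero.mp (le_antisymm this (abs_nonneg _))
    have : (fun y => ψ y) = fun _ => (0:ℝ) := funext hψ0
    simp [this]
    nlinarith
  · -- main case: scale ψ by (B+L)⁻¹
    set c : ℝ := (B + L)⁻¹ with hc
    have hc0 : 0 < c := inv_pos.mpr hBL0
    set ψ' : ℝ≥0 → ℝ := fun y => ψ y * c with hψ'
    have hψ'b : ∀ y, |ψ' y| ≤ B * c := by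
      intro y
      rw [hψ', abs_mul, abs_of_pos hc0]
      exact mul_le_mul_of_nonneg_right (hψb y) hc0.le
    have hψ'l : ∀ x y, |ψ' x - ψ' y| ≤ (L * c) * dist x y := by
      intro x y
      have : ψ' x - ψ' y = (ψ x - ψ y) * c := by rw [hψ']; ring
      rw [this, abs_mul, abs_of_pos hc0]
      calc |ψ x - ψ y| * c ≤ (L * dist x y) * c :=
            mul_le_mul_of_nonneg_right (hψl x y) hc0.le
        _ = (L * c) * dist x y := by ring
    have hψ'BL : IsBL ψ' := ⟨⟨B * c, hψ'b⟩, ⟨L * c, hψ'l⟩⟩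
    have hψ'n : blN ψ' ≤ 1 := by
      have hs : supN ψ' ≤ B * c := by
        refine Real.iSup_le (fun y => hψ'b y) (by positivity)
      have hl : lipC ψ' ≤ L * c := by
        refine csInf_le ⟨0, fun b hb => hb.1⟩ ?_
        exact ⟨by positivity, hψ'l⟩
      have : B * c + L * c = 1 := by
        rw [hc]; field_simp
      unfold blN; linarith
    have key := le_flatDist hψ'BL hψ'n μ ν
    have hint : ∀ (ρ : Measure ℝ≥0), (∫ y, ψ' y ∂ρ) = (∫ y, ψ y ∂ρ) * c := by
      intro ρ
      rw [hψ']
      exact integral_mul_const c ψ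
    rw [hint μ, hint ν] at key
    have : |(∫ y, ψ y ∂μ) * c - (∫ y, ψ y ∂ν) * c|
        = |(∫ y, ψ y ∂μ) - ∫ y, ψ y ∂ν| * c := by
      rw [← sub_mul, abs_mul, abs_of_pos hc0]
    rw [this] at key
    calc |(∫ y, ψ y ∂μ) - ∫ y, ψ y ∂ν|
        = (|(∫ y, ψ y ∂μ) - ∫ y, ψ y ∂ν| * c) * (B + L) := by
          rw [hc]; field_simp
      _ ≤ flatDist μ ν * (B + L) := mul_le_mul_of_nonneg_right key hBL0.le
      _ = (B + L) * flatDist μ ν := mul_comm _ _
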